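/- Let (G_v, G_q) solve the Stokes Green's function system: -Δ_x G_v(x,y) + ∇_x G_q(x,y) = I δ(x−y), ∇_x · G_v = 0, with G_v(x,y) related to G_q by the symmetry G_v(x,y) acting on translations. If additionally ∂G_q/∂x_i = −∂G_q/∂y_i for the pressure Green's function (translation-type dependence), then the Laplacian in x of the traction kernel satisfies Δ_x T_{i,j}(G_v, G_q) = 2 ∂²G_q/(∂x_i ∂y_j), where T_{i,j}(G_v,G_q) = −δ_{i,j} G_q + ∂(G_v)_j/∂y_i + ∂(G_v)_i/∂y_j. -/
import Mathlib


/-- symbolic formalization of the identity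
`Δ_x T_{i,j}(G_v, G_q) = 2 ∂²G_q/(∂x_i ∂y_j)` for the traction kernel of the Stokes
Green's pair away from the diagonal.  The space `P` of smooth kernels on
`Ω × Ω` (minus the diagonal) carries commuting partial-derivative operators
`Dx i` (in `x`) and `Dy i` (in `y`); the translation-type dependence of `G_q` is
expressed by `Dy i = -Dx i` on the kernels involved; the Stokes system gives
`Δ_x (G_v)_j = ∂_{x_j} G_q` and `∇_x · G_v = 0`.  The traction kernel is
`T_{i,j} = -δ_{i,j} G_q + ∂(G_v)_j/∂y_i + ∂(G_v)_i/∂y_j`. -/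
theorem traction_kernel_laplacian
    {P : Type*} [AddCommGroup P] [Module ℝ P]
    (Dx Dy : Fin 2 → Module.End ℝ P)
    (hxx : ∀ i j, Commute (Dx i) (Dx j))
    (hxy : ∀ i j, Commute (Dx i) (Dy j))
    (htrans : ∀ i, Dy i = -Dx i)   -- ∂/∂y_i = -∂/∂x_i (translation-type dependence)
    (gv : Fin 2 → P) (gq : P)
    (hstokes : ∀ j, (Dx 0 ^ 2 + Dx 1 ^ 2) (gv j) = Dx j gq)  -- Δ_x (G_v)_j = ∂_{x_j} G_q
    (hdivfree : (∑ i, Dx i (gv i)) = 0)                       -- ∇_x · G_v = 0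
    (i j : Fin 2) :
    (Dx 0 ^ 2 + Dx 1 ^ 2)
        (-(if i = j then gq else 0) + Dy i (gv j) + Dy j (gv i))
      = (2 : ℝ) • Dx i (Dy j gq) := by
  set L : Module.End ℝ P := Dx 0 ^ 2 + Dx 1 ^ 2 with hL
  have hcomm : ∀ k, Commute L (Dx k) := fun k =>
    ((hxx 0 k).pow_left 2).add_left ((hxx 1 k).pow_left 2)
  have hswap : ∀ k (p : P), L (Dx k p) = Dx k (L p) := by
    intro k p
    have := congrArg (fun (e : Module.End ℝ P) => e p) (hcomm k).eq
    simpa [Module.End.mul_apply] using this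
  -- harmonicity of gq
  have hq : L gq = 0 := by
    have h2 : Dx 0 (gv 0) + Dx 1 (gv 1) = 0 := by
      simpa [Fin.sum_univ_two] using hdivfree
    have : L gq = L (Dx 0 (gv 0) + Dx 1 (gv 1)) := by
      have e0 : Dx 0 gq = L (gv 0) := (hstokes 0).symm
      have e1 : Dx 1 gq = L (gv 1) := (hstokes 1).symm
      calc L gq = Dx 0 (Dx 0 gq) + Dx 1 (Dx 1 gq) := by
            simp [hL, pow_two, Module.End.mul_apply]
        _ = Dx 0 (L (gv 0)) + Dx 1 (L (gv 1)) := by rw [e0, e1]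
        _ = L (Dx 0 (gv 0)) + L (Dx 1 (gv 1)) := by rw [hswap, hswap]
        _ = L (Dx 0 (gv 0) + Dx 1 (gv 1)) := by rw [map_add]
    rw [this, h2, map_zero]
  have hij : Dx j (Dx i gq) = Dx i (Dx j gq) := by
    have := congrArg (fun (e : Module.End ℝ P) => e gq) (hxx j i).eq
    simpa [Module.End.mul_apply] using this
  rw [htrans i, htrans j]
  simp only [LinearMap.neg_apply, map_add, map_neg]
  rw [hswap i (gv j), hswap j (gv i), hstokes i, hstokes j, hij]
  by_cases h : i = j
  · simp [h, hq, two_smul]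
  · simp [h, two_smul]
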